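/- arXiv:1803.02260 — 6 statements merged into one kernel-verified Lean document; each statement's English description precedes it below -/
import Mathlib

section
/- Let N ≥ 2, l and m be positive integers with 1 ≤ l ≤ N−1, N ≠ 2l and 1 ≤ m ≤ N. Then the second moment of the real part U_l(m,N) of X_l(m,N) satisfies E[(U_l(m,N))²] = (1/C(N,m)) · Σ_{S ⊆ {1,…,N}, |S| = m} (Σ_{n∈S} cos(2πnl/N))² = m(N−m)/(2(N−1)). -/
open Finset

/-- Number of `m`-subsets of `A` containing a fixed subset `T`. -/
lemma aux_card_filter_subset {α : Type*} [DecidableEq α] (A T : Finset α) (m : ℕ)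
    (hT : T ⊆ A) (hm : T.card ≤ m) :
    ((A.powersetCard m).filter (fun S => T ⊆ S)).card
      = (A.card - T.card).choose (m - T.card) := by
  have key : ((A.powersetCard m).filter (fun S => T ⊆ S)).card
      = ((A \ T).powersetCard (m - T.card)).card := by
    apply Finset.card_nbij' (fun S => S \ T) (fun S => S ∪ T)
    · intro S hS
      simp only [Finset.mem_coe, mem_filter, mem_powersetCard] at hS ⊢
      refine ⟨sdiff_subset_sdiff hS.1.1 le_rfl, ?_⟩
      rw [card_sdiff_of_subset hS.2, hS.1.2]
    · intro S hS
      simp only [Finset.mem_coe, mem_filter, mem_powersetCard] at hS ⊢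
      have hdisj : Disjoint S T := disjoint_of_subset_left hS.1 (sdiff_disjoint)
      refine ⟨⟨union_subset (hS.1.trans sdiff_subset) hT, ?_⟩, subset_union_right⟩
      rw [card_union_of_disjoint hdisj, hS.2]
      omega
    · intro S hS
      simp only [Finset.mem_coe, mem_filter, mem_powersetCard] at hS
      exact sdiff_union_of_subset hS.2
    · intro S hS
      simp only [Finset.mem_coe, mem_powersetCard] at hS
      have hdisj : Disjoint S T := disjoint_of_subset_left hS.1 (sdiff_disjoint)
      dsimp only
      rw [union_sdiff_right, sdiff_eq_self_of_disjoint hdisj]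
  rw [key, card_powersetCard, card_sdiff_of_subset hT]

/-- The sum over `m`-subsets of the square of the partial sums. -/
lemma aux_sum_sq {α : Type*} [DecidableEq α] (A : Finset α) (m : ℕ) (f : α → ℝ)
    (hm : 1 ≤ m) :
    ∑ S ∈ A.powersetCard m, (∑ n ∈ S, f n) ^ 2
      = ((A.card - 1).choose (m - 1) : ℝ) * (∑ n ∈ A, f n ^ 2)
        + (if 2 ≤ m then ((A.card - 2).choose (m - 2) : ℝ) else 0)
            * ((∑ n ∈ A, f n) ^ 2 - ∑ n ∈ A, f n ^ 2) := by
  set c1 : ℝ := ((A.card - 1).choose (m - 1) : ℝ) with hc1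
  set c2 : ℝ := (if 2 ≤ m then ((A.card - 2).choose (m - 2) : ℝ) else 0) with hc2
  have step1 : ∀ S ∈ A.powersetCard m,
      (∑ n ∈ S, f n) ^ 2
        = ∑ n ∈ A, ∑ n' ∈ A,
            (if n ∈ S ∧ n' ∈ S then f n * f n' else 0) := by
    intro S hS
    rw [mem_powersetCard] at hS
    have h1 : (∑ n ∈ S, f n) = ∑ n ∈ A, (if n ∈ S then f n else 0) := by
      rw [Finset.sum_ite_mem, Finset.inter_eq_right.mpr hS.1]
    rw [h1, sq, Finset.sum_mul_sum]
    apply Finset.sum_congr rfl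
    intro n _
    apply Finset.sum_congr rfl
    intro n' _
    by_cases h : n ∈ S <;> by_cases h' : n' ∈ S <;> simp [h, h']
  have step2 : ∀ n ∈ A, ∀ n' ∈ A,
      (∑ S ∈ A.powersetCard m, (if n ∈ S ∧ n' ∈ S then f n * f n' else 0))
        = (if n = n' then c1 else c2) * (f n * f n') := by
    intro n hn n' hn'
    rw [← Finset.sum_filter, Finset.sum_const, nsmul_eq_mul]
    congr 1
    have hsub : ∀ S : Finset α, (n ∈ S ∧ n' ∈ S) ↔ ({n, n'} : Finset α) ⊆ S := by
      intro S
      simp [Finset.insert_subset_iff]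
    rw [Finset.filter_congr (fun S _ => by rw [hsub S])]
    by_cases hnn : n = n'
    · subst hnn
      have hpair : ({n, n} : Finset α) = {n} := by simp
      rw [hpair, aux_card_filter_subset A {n} m (by simpa using hn) (by simpa using hm)]
      simp [hc1]
    · have hcard : ({n, n'} : Finset α).card = 2 := by
        rw [Finset.card_insert_of_notMem (by simpa using hnn), Finset.card_singleton]
      by_cases h2 : 2 ≤ m
      · rw [aux_card_filter_subset A {n, n'} m
          (by simp [Finset.insert_subset_iff, hn, hn']) (hcard ▸ h2), hcard]
        simp [hc2, h2, hnn]
      · have hm1 : m = 1 := by omega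
        have hempty : ((A.powersetCard m).filter (fun S => ({n, n'} : Finset α) ⊆ S)) = ∅ := by
          rw [Finset.filter_eq_empty_iff]
          intro S hS
          rw [mem_powersetCard] at hS
          intro hsub
          have := Finset.card_le_card hsub
          omega
        rw [hempty]
        simp [hc2, h2, hnn]
  rw [Finset.sum_congr rfl step1, Finset.sum_comm]
  have main : ∀ n ∈ A,
      (∑ S ∈ A.powersetCard m, ∑ n' ∈ A, (if n ∈ S ∧ n' ∈ S then f n * f n' else 0))
        = ∑ n' ∈ A, (if n = n' then c1 else c2) * (f n * f n') := by
    intro n hn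
    rw [Finset.sum_comm]
    exact Finset.sum_congr rfl fun n' hn' => step2 n hn n' hn'
  rw [Finset.sum_congr rfl main]
  calc ∑ n ∈ A, ∑ n' ∈ A, (if n = n' then c1 else c2) * (f n * f n')
      = ∑ n ∈ A, ∑ n' ∈ A,
          (c2 * (f n * f n') + (if n = n' then (c1 - c2) * (f n * f n') else 0)) := by
        apply Finset.sum_congr rfl; intro n _
        apply Finset.sum_congr rfl; intro n' _
        by_cases h : n = n' <;> simp [h] <;> ring
    _ = c1 * (∑ n ∈ A, f n ^ 2) + c2 * ((∑ n ∈ A, f n) ^ 2 - ∑ n ∈ A, f n ^ 2) := by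
        rw [Finset.sum_congr rfl (fun n _ => Finset.sum_add_distrib)]
        rw [Finset.sum_add_distrib]
        have e1 : ∑ n ∈ A, ∑ n' ∈ A, c2 * (f n * f n')
            = c2 * (∑ n ∈ A, f n) ^ 2 := by
          rw [sq, Finset.sum_mul_sum, Finset.mul_sum]
          exact Finset.sum_congr rfl fun n _ => by rw [Finset.mul_sum]
        have e2 : ∑ n ∈ A, ∑ n' ∈ A, (if n = n' then (c1 - c2) * (f n * f n') else 0)
            = (c1 - c2) * ∑ n ∈ A, f n ^ 2 := by
          rw [Finset.mul_sum]
          apply Finset.sum_congr rfl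
          intro n hn
          rw [Finset.sum_ite_eq A n (fun n' => (c1 - c2) * (f n * f n')), if_pos hn]
          ring
        rw [e1, e2]; ring

lemma aux_not_dvd (N j : ℕ) (h0 : 0 < j) (h1 : j < 2 * N) (h2 : j ≠ N) :
    ¬ (N : ℤ) ∣ (j : ℤ) := by
  rintro ⟨k, hk⟩
  have hN0 : 0 < N := by omega
  have hNZ : (0:ℤ) < N := by exact_mod_cast hN0
  have hjZ : (0:ℤ) < j := by exact_mod_cast h0
  have hjZ2 : (j:ℤ) < 2 * N := by exact_mod_cast h1
  have hk1 : k = 1 := by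
    rcases le_or_gt k 0 with h | h
    · nlinarith
    · rcases le_or_gt 2 k with h' | h'
      · nlinarith
      · omega
  rw [hk1, mul_one] at hk
  exact h2 (by exact_mod_cast hk)

/-- Sum of `cos(2π n j / N)` over a full period vanishes when `N ∤ j`. -/
lemma aux_sum_cos (N j : ℕ) (hN : 0 < N) (hj : ¬ (N : ℤ) ∣ (j : ℤ)) :
    ∑ n ∈ Finset.Icc 1 N, Real.cos (2 * Real.pi * (n : ℝ) * (j : ℝ) / (N : ℝ)) = 0 := by
  set θ : ℝ := 2 * Real.pi * (j : ℝ) / (N : ℝ) with hθ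
  set ω : ℂ := Complex.exp (θ * Complex.I) with hω
  have hNne : (N : ℝ) ≠ 0 := Nat.cast_ne_zero.mpr hN.ne'
  have hNC : (N : ℂ) ≠ 0 := Nat.cast_ne_zero.mpr hN.ne'
  have hω1 : ω ≠ 1 := by
    intro heq
    rw [hω, Complex.exp_eq_one_iff] at heq
    obtain ⟨k, hk⟩ := heq
    rw [show (k : ℂ) * (2 * ↑Real.pi * Complex.I) = ((k : ℂ) * (2 * Real.pi)) * Complex.I
      from by ring] at hk
    have hθk : (θ : ℂ) = (k : ℂ) * (2 * Real.pi) := mul_right_cancel₀ Complex.I_ne_zero hk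
    have hre : θ = (k : ℝ) * (2 * Real.pi) := by
      have := congrArg Complex.re hθk
      push_cast at this
      simpa using this
    rw [hθ] at hre
    have hpi : (0:ℝ) < Real.pi := Real.pi_pos
    have hjk : (j : ℝ) = (k : ℝ) * (N : ℝ) := by
      field_simp at hre
      nlinarith [hre]
    exact hj ⟨k, by exact_mod_cast (by linarith [hjk] : (j:ℝ) = (N:ℝ) * (k:ℝ))⟩
  have hωN : ω ^ N = 1 := by
    rw [hω, ← Complex.exp_nat_mul]
    have harg : (N : ℂ) * ((θ : ℝ) * Complex.I) = (j : ℤ) * (2 * Real.pi * Complex.I) := by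
      rw [hθ]
      push_cast
      field_simp
    rw [harg, Complex.exp_int_mul_two_pi_mul_I]
  have hsum : ∑ n ∈ Finset.Icc 1 N, ω ^ n = 0 := by
    have h1 : ∑ n ∈ Finset.Icc 1 N, ω ^ n = ∑ n ∈ Finset.range N, ω ^ (n + 1) := by
      rw [← Finset.Ico_add_one_right_eq_Icc, Finset.sum_Ico_eq_sum_range]
      simp [add_comm]
    rw [h1]
    have h2 : ∑ n ∈ Finset.range N, ω ^ (n + 1) = ω * ∑ n ∈ Finset.range N, ω ^ n := by
      rw [Finset.mul_sum]
      exact Finset.sum_congr rfl fun n _ => by ring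
    rw [h2, geom_sum_eq hω1, hωN]
    simp
  have hre : ∀ n : ℕ, Real.cos (2 * Real.pi * (n : ℝ) * (j : ℝ) / (N : ℝ)) = (ω ^ n).re := by
    intro n
    rw [hω, ← Complex.exp_nat_mul]
    have harg : (n : ℂ) * ((θ : ℝ) * Complex.I) = ((n * θ : ℝ) : ℂ) * Complex.I := by
      push_cast; ring
    rw [harg, Complex.exp_ofReal_mul_I_re]
    congr 1
    rw [hθ]; field_simp
  calc ∑ n ∈ Finset.Icc 1 N, Real.cos (2 * Real.pi * (n : ℝ) * (j : ℝ) / (N : ℝ))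
      = ∑ n ∈ Finset.Icc 1 N, (ω ^ n).re := Finset.sum_congr rfl fun n _ => hre n
    _ = (∑ n ∈ Finset.Icc 1 N, ω ^ n).re := by rw [Complex.re_sum]
    _ = 0 := by rw [hsum]; simp

/-- For `N ≥ 2`, `1 ≤ l ≤ N-1`, `N ≠ 2l`, `1 ≤ m ≤ N`, the second
moment of the real part of `X_l(m,N)` satisfies
`(1/C(N,m)) · ∑_{S, |S|=m} (∑_{n∈S} cos(2πnl/N))² = m(N-m)/(2(N-1))`. -/
theorem stmt_3 (N l m : ℕ) (hN : 2 ≤ N) (hl1 : 1 ≤ l) (hl2 : l ≤ N - 1)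
    (hNl : N ≠ 2 * l) (hm1 : 1 ≤ m) (hm2 : m ≤ N) :
    (1 / (N.choose m) : ℝ) *
        ∑ S ∈ (Finset.Icc 1 N).powersetCard m,
          (∑ n ∈ S, Real.cos (2 * Real.pi * (n : ℝ) * (l : ℝ) / (N : ℝ))) ^ 2
      = (m : ℝ) * ((N : ℝ) - (m : ℝ)) / (2 * ((N : ℝ) - 1)) := by
  have hcard : (Finset.Icc 1 N).card = N := by
    rw [Nat.card_Icc]; omega
  set f : ℕ → ℝ := fun n => Real.cos (2 * Real.pi * (n : ℝ) * (l : ℝ) / (N : ℝ)) with hf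
  have hsum0 : ∑ n ∈ Finset.Icc 1 N, f n = 0 :=
    aux_sum_cos N l (by omega) (aux_not_dvd N l (by omega) (by omega) (by omega))
  have hsum2 : ∑ n ∈ Finset.Icc 1 N, f n ^ 2 = (N : ℝ) / 2 := by
    have hcos2 : ∀ n : ℕ, f n ^ 2
        = 1 / 2 + Real.cos (2 * Real.pi * (n : ℝ) * ((2 * l : ℕ) : ℝ) / (N : ℝ)) / 2 := by
      intro n
      rw [hf]
      rw [Real.cos_sq]
      congr 2
      push_cast
      ring
    rw [Finset.sum_congr rfl fun n _ => hcos2 n, Finset.sum_add_distrib]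
    have hz : ∑ x ∈ Finset.Icc 1 N, Real.cos (2 * Real.pi * (x : ℝ) * ((2 * l : ℕ) : ℝ) / (N : ℝ)) / 2 = 0 := by
      rw [← Finset.sum_div,
        aux_sum_cos N (2 * l) (by omega) (aux_not_dvd N (2 * l) (by omega) (by omega) (by omega))]
      norm_num
    rw [hz, add_zero, Finset.sum_const, hcard]
    push_cast
    ring
  rw [aux_sum_sq (Finset.Icc 1 N) m f hm1, hsum0, hsum2, hcard]
  have hC : 0 < N.choose m := Nat.choose_pos hm2
  have hCne : ((N.choose m : ℕ) : ℝ) ≠ 0 := Nat.cast_ne_zero.mpr hC.ne'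
  have hN1 : (N : ℝ) - 1 ≠ 0 := by
    have : (2:ℝ) ≤ (N:ℝ) := by exact_mod_cast hN
    linarith
  have f1nat : N * (N - 1).choose (m - 1) = N.choose m * m := by
    have h := Nat.add_one_mul_choose_eq (N - 1) (m - 1)
    have e1 : N - 1 + 1 = N := by omega
    have e2 : m - 1 + 1 = m := by omega
    rw [e1, e2] at h
    exact h
  have f1 : (N : ℝ) * ((N - 1).choose (m - 1) : ℝ) = (N.choose m : ℝ) * m := by
    exact_mod_cast f1nat
  by_cases h2 : 2 ≤ m
  · have f2nat : (N - 1) * (N - 2).choose (m - 2) = (N - 1).choose (m - 1) * (m - 1) := by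
      have h := Nat.add_one_mul_choose_eq (N - 2) (m - 2)
      have e1 : N - 2 + 1 = N - 1 := by omega
      have e2 : m - 2 + 1 = m - 1 := by omega
      rw [e1, e2] at h
      exact h
    have f2 : ((N : ℝ) - 1) * ((N - 2).choose (m - 2) : ℝ)
        = ((N - 1).choose (m - 1) : ℝ) * ((m : ℝ) - 1) := by
      have := f2nat
      have hcast : ((N - 1 : ℕ) : ℝ) = (N : ℝ) - 1 := by
        push_cast [Nat.cast_sub (by omega : 1 ≤ N)]; ring
      have hcast2 : ((m - 1 : ℕ) : ℝ) = (m : ℝ) - 1 := by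
        push_cast [Nat.cast_sub (by omega : 1 ≤ m)]; ring
      calc ((N : ℝ) - 1) * ((N - 2).choose (m - 2) : ℝ)
          = ((N - 1 : ℕ) : ℝ) * ((N - 2).choose (m - 2) : ℝ) := by rw [hcast]
        _ = ((N - 1).choose (m - 1) : ℝ) * ((m - 1 : ℕ) : ℝ) := by exact_mod_cast this
        _ = ((N - 1).choose (m - 1) : ℝ) * ((m : ℝ) - 1) := by rw [hcast2]
    rw [if_pos h2]
    field_simp
    nlinarith [f1, f2, sq_nonneg ((N:ℝ) - (m:ℝ))]
  · have hm' : m = 1 := by omega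
    subst hm'
    rw [if_neg h2]
    simp only [Nat.choose_one_right] at *
    simp only [Nat.sub_self, Nat.choose_zero_right, Nat.cast_one, one_mul, zero_mul]
    field_simp
    simp
end

section
/- Let N ≥ 2, l and m be positive integers with 1 ≤ l ≤ N−1, N ≠ 2l and 1 ≤ m ≤ N. Then the second moment of the imaginary part V_l(m,N) of X_l(m,N) satisfies E[(V_l(m,N))²] = (1/C(N,m)) · Σ_{S ⊆ {1,…,N}, |S| = m} (Σ_{n∈S} sin(2πnl/N))² = m(N−m)/(2(N−1)). -/
open Finset

/-- Counting lemma: number of `n`-subsets of `T` containing a fixed `U ⊆ T`. -/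
lemma count_subsets {α : Type*} [DecidableEq α] (T U : Finset α) (hU : U ⊆ T)
    {n : ℕ} (hn : U.card ≤ n) :
    ((T.powersetCard n).filter (fun S => U ⊆ S)).card
      = (T.card - U.card).choose (n - U.card) := by
  rw [← Finset.card_sdiff_of_subset hU, ← Finset.card_powersetCard]
  apply Finset.card_bij' (fun S _ => S \ U) (fun S _ => S ∪ U)
  · intro S hS
    simp only [Finset.mem_filter, Finset.mem_powersetCard] at hS
    obtain ⟨⟨hST, hcard⟩, hUS⟩ := hS
    rw [Finset.mem_powersetCard]
    constructor
    · exact Finset.sdiff_subset_sdiff hST (le_refl U)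
    · rw [Finset.card_sdiff_of_subset hUS, hcard]
  · intro S hS
    rw [Finset.mem_powersetCard] at hS
    obtain ⟨hsub, hcard⟩ := hS
    have hdisj : Disjoint S U := Finset.disjoint_of_subset_left hsub Finset.sdiff_disjoint
    rw [Finset.mem_filter, Finset.mem_powersetCard]
    refine ⟨⟨Finset.union_subset (hsub.trans Finset.sdiff_subset) hU, ?_⟩,
      Finset.subset_union_right⟩
    rw [Finset.card_union_of_disjoint hdisj, hcard]
    omega
  · intro S hS
    simp only [Finset.mem_filter] at hS
    exact Finset.sdiff_union_of_subset hS.2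
  · intro S hS
    rw [Finset.mem_powersetCard] at hS
    exact Finset.union_sdiff_cancel_right
      (Finset.disjoint_of_subset_left hS.1 Finset.sdiff_disjoint)

/-- Key combinatorial identity for the sum of squares over `m`-subsets (`m ≥ 2`). -/
lemma key_sum_sq (T : Finset ℕ) {m : ℕ} (hm : 2 ≤ m) (f : ℕ → ℝ) :
    ∑ S ∈ T.powersetCard m, (∑ n ∈ S, f n) ^ 2
      = ((T.card - 1).choose (m - 1) : ℝ) * (∑ n ∈ T, f n ^ 2)
        + ((T.card - 2).choose (m - 2) : ℝ)
            * ((∑ n ∈ T, f n) ^ 2 - ∑ n ∈ T, f n ^ 2) := by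
  have step1 : ∀ S ∈ T.powersetCard m,
      (∑ n ∈ S, f n) ^ 2
        = ∑ n ∈ T, ∑ n' ∈ T, (if n ∈ S ∧ n' ∈ S then f n * f n' else 0) := by
    intro S hS
    rw [Finset.mem_powersetCard] at hS
    have h : ∑ n ∈ S, f n = ∑ n ∈ T, if n ∈ S then f n else 0 := by
      rw [Finset.sum_ite_mem, Finset.inter_eq_right.mpr hS.1]
    rw [sq, h, Finset.sum_mul_sum]
    refine Finset.sum_congr rfl fun n _ => Finset.sum_congr rfl fun n' _ => ?_
    by_cases h1 : n ∈ S <;> by_cases h2 : n' ∈ S <;> simp [h1, h2]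
  rw [Finset.sum_congr rfl step1, Finset.sum_comm]
  have step2 : ∀ n ∈ T,
      ∑ S ∈ T.powersetCard m, ∑ n' ∈ T, (if n ∈ S ∧ n' ∈ S then f n * f n' else 0)
        = ∑ n' ∈ T,
            (((T.powersetCard m).filter (fun S => n ∈ S ∧ n' ∈ S)).card : ℝ)
              * (f n * f n') := by
    intro n _
    rw [Finset.sum_comm]
    refine Finset.sum_congr rfl fun n' _ => ?_
    rw [← Finset.sum_filter, Finset.sum_const, nsmul_eq_mul]
  rw [Finset.sum_congr rfl step2]
  have count_eq : ∀ n ∈ T, ∀ n' ∈ T,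
      (((T.powersetCard m).filter (fun S => n ∈ S ∧ n' ∈ S)).card : ℝ)
        = if n = n' then ((T.card - 1).choose (m - 1) : ℝ)
          else ((T.card - 2).choose (m - 2) : ℝ) := by
    intro n hn n' hn'
    by_cases hnn : n = n'
    · subst hnn
      rw [if_pos rfl]
      have : ((T.powersetCard m).filter (fun S => n ∈ S ∧ n ∈ S))
          = (T.powersetCard m).filter (fun S => ({n} : Finset ℕ) ⊆ S) := by
        apply Finset.filter_congr
        intro S _
        simp
      rw [this, count_subsets T {n} (Finset.singleton_subset_iff.mpr hn)
        (by simpa using hm.trans' one_le_two)]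
      simp
    · rw [if_neg hnn]
      have : ((T.powersetCard m).filter (fun S => n ∈ S ∧ n' ∈ S))
          = (T.powersetCard m).filter (fun S => ({n, n'} : Finset ℕ) ⊆ S) := by
        apply Finset.filter_congr
        intro S _
        simp [Finset.insert_subset_iff]
      rw [this, count_subsets T {n, n'}
        (by simp [Finset.insert_subset_iff, hn, hn'])
        (by rwa [Finset.card_pair hnn])]
      rw [Finset.card_pair hnn]
  calc ∑ n ∈ T, ∑ n' ∈ T,
        (((T.powersetCard m).filter (fun S => n ∈ S ∧ n' ∈ S)).card : ℝ) * (f n * f n')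
      = ∑ n ∈ T, ∑ n' ∈ T,
          (((T.card - 2).choose (m - 2) : ℝ) * (f n * f n')
            + (if n = n' then
                (((T.card - 1).choose (m - 1) : ℝ) - ((T.card - 2).choose (m - 2) : ℝ))
                  * (f n * f n') else 0)) := by
        refine Finset.sum_congr rfl fun n hn => Finset.sum_congr rfl fun n' hn' => ?_
        rw [count_eq n hn n' hn']
        by_cases hnn : n = n' <;> simp [hnn] <;> ring
    _ = ((T.card - 1).choose (m - 1) : ℝ) * (∑ n ∈ T, f n ^ 2)
        + ((T.card - 2).choose (m - 2) : ℝ)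
            * ((∑ n ∈ T, f n) ^ 2 - ∑ n ∈ T, f n ^ 2) := by
        rw [Finset.sum_congr rfl (fun n _ => Finset.sum_add_distrib)]
        rw [Finset.sum_add_distrib]
        have h1 : ∑ n ∈ T, ∑ n' ∈ T, ((T.card - 2).choose (m - 2) : ℝ) * (f n * f n')
            = ((T.card - 2).choose (m - 2) : ℝ) * (∑ n ∈ T, f n) ^ 2 := by
          rw [sq, Finset.sum_mul_sum, Finset.mul_sum]
          exact Finset.sum_congr rfl fun n _ => by rw [Finset.mul_sum]
        have h2 : ∑ n ∈ T, ∑ n' ∈ T,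
            (if n = n' then
              (((T.card - 1).choose (m - 1) : ℝ) - ((T.card - 2).choose (m - 2) : ℝ))
                * (f n * f n') else 0)
            = (((T.card - 1).choose (m - 1) : ℝ) - ((T.card - 2).choose (m - 2) : ℝ))
                * ∑ n ∈ T, f n ^ 2 := by
          rw [Finset.mul_sum]
          refine Finset.sum_congr rfl fun n hn => ?_
          rw [Finset.sum_ite_eq, if_pos hn]
          ring
        rw [h1, h2]
        ring

/-- Exponential sum over a full period vanishes when `N ∤ k`. -/
lemma exp_sum_zero (N k : ℕ) (hN : 0 < N) (hk : ¬ N ∣ k) :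
    ∑ n ∈ Finset.Icc 1 N,
      Complex.exp ((2 * Real.pi * n * k / N : ℝ) * Complex.I) = 0 := by
  set ζ : ℂ := Complex.exp ((2 * Real.pi * k / N : ℝ) * Complex.I) with hζ
  have hπ : (Real.pi : ℂ) ≠ 0 := by exact_mod_cast Real.pi_ne_zero
  have hNne : (N : ℂ) ≠ 0 := by exact_mod_cast hN.ne'
  have hζpow : ∀ n : ℕ,
      Complex.exp ((2 * Real.pi * n * k / N : ℝ) * Complex.I) = ζ ^ n := by
    intro n
    rw [hζ, ← Complex.exp_nat_mul]
    congr 1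
    push_cast
    ring
  have hζN : ζ ^ N = 1 := by
    rw [hζ, ← Complex.exp_nat_mul]
    have : (N : ℂ) * (((2 * Real.pi * k / N : ℝ) : ℂ) * Complex.I)
        = (k : ℤ) * (2 * Real.pi * Complex.I) := by
      push_cast
      field_simp
    rw [this, Complex.exp_int_mul_two_pi_mul_I]
  have hζ1 : ζ ≠ 1 := by
    rw [hζ, Ne, Complex.exp_eq_one_iff]
    rintro ⟨n, hn⟩
    apply hk
    have h2πI : (2 * (Real.pi : ℂ) * Complex.I) ≠ 0 :=
      mul_ne_zero (mul_ne_zero two_ne_zero hπ) Complex.I_ne_zero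
    have hkn : (k : ℂ) = n * N := by
      push_cast at hn
      field_simp at hn
      apply mul_left_cancel₀ h2πI
      linear_combination (2 * (Real.pi : ℂ) * Complex.I) * hn
    have hkz : (k : ℤ) = n * N := by exact_mod_cast hkn
    exact Int.natCast_dvd_natCast.mp ⟨n, by rw [hkz]; ring⟩
  calc ∑ n ∈ Finset.Icc 1 N, Complex.exp ((2 * Real.pi * n * k / N : ℝ) * Complex.I)
      = ∑ n ∈ Finset.Icc 1 N, ζ ^ n := Finset.sum_congr rfl fun n _ => hζpow n
    _ = ∑ j ∈ Finset.range N, ζ ^ (1 + j) := by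
        rw [← Finset.Ico_add_one_right_eq_Icc, Finset.sum_Ico_eq_sum_range]
        simp
    _ = ζ * ∑ j ∈ Finset.range N, ζ ^ j := by
        rw [Finset.mul_sum]
        exact Finset.sum_congr rfl fun j _ => by rw [pow_add, pow_one]
    _ = 0 := by
        rw [geom_sum_eq hζ1, hζN, sub_self, zero_div, mul_zero]

lemma sin_sum_zero (N k : ℕ) (hN : 0 < N) (hk : ¬ N ∣ k) :
    ∑ n ∈ Finset.Icc 1 N, Real.sin (2 * Real.pi * n * k / N) = 0 := by
  have h := congrArg Complex.im (exp_sum_zero N k hN hk)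
  rw [Complex.im_sum] at h
  simp only [Complex.exp_ofReal_mul_I_im] at h
  exact h

lemma cos_sum_zero (N k : ℕ) (hN : 0 < N) (hk : ¬ N ∣ k) :
    ∑ n ∈ Finset.Icc 1 N, Real.cos (2 * Real.pi * n * k / N) = 0 := by
  have h := congrArg Complex.re (exp_sum_zero N k hN hk)
  rw [Complex.re_sum] at h
  simp only [Complex.exp_ofReal_mul_I_re] at h
  exact h

/-- For `N ≥ 2`, `1 ≤ l ≤ N-1`, `N ≠ 2l`, `1 ≤ m ≤ N`, the second
moment of the imaginary part of `X_l(m,N)` satisfies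
`(1/C(N,m)) · ∑_{S, |S|=m} (∑_{n∈S} sin(2πnl/N))² = m(N-m)/(2(N-1))`. -/
theorem stmt_4 (N l m : ℕ) (hN : 2 ≤ N) (hl1 : 1 ≤ l) (hl2 : l ≤ N - 1)
    (hNl : N ≠ 2 * l) (hm1 : 1 ≤ m) (hm2 : m ≤ N) :
    (1 / (N.choose m) : ℝ) *
        ∑ S ∈ (Finset.Icc 1 N).powersetCard m,
          (∑ n ∈ S, Real.sin (2 * Real.pi * (n : ℝ) * (l : ℝ) / (N : ℝ))) ^ 2
      = (m : ℝ) * ((N : ℝ) - (m : ℝ)) / (2 * ((N : ℝ) - 1)) := by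
  have hN0 : 0 < N := by omega
  have hdvd1 : ¬ N ∣ l := by
    intro h
    have := Nat.le_of_dvd (by omega) h
    omega
  have hdvd2 : ¬ N ∣ 2 * l := by
    rintro ⟨t, ht⟩
    have ht0 : t ≠ 0 := by rintro rfl; omega
    have ht2 : t < 2 := by
      by_contra h2
      have : N * 2 ≤ N * t := Nat.mul_le_mul_left N (by omega)
      omega
    have ht1 : t = 1 := by omega
    subst ht1
    omega
  have hA : ∑ n ∈ Finset.Icc 1 N, Real.sin (2 * Real.pi * (n : ℝ) * (l : ℝ) / (N : ℝ)) = 0 :=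
    sin_sum_zero N l hN0 hdvd1
  have hB : ∑ n ∈ Finset.Icc 1 N,
      Real.sin (2 * Real.pi * (n : ℝ) * (l : ℝ) / (N : ℝ)) ^ 2 = (N : ℝ) / 2 := by
    have hrw : ∀ n ∈ Finset.Icc 1 N,
        Real.sin (2 * Real.pi * (n : ℝ) * (l : ℝ) / (N : ℝ)) ^ 2
          = 1 / 2 - Real.cos (2 * Real.pi * (n : ℝ) * ((2 * l : ℕ) : ℝ) / (N : ℝ)) / 2 := by
      intro n _
      rw [Real.sin_sq_eq_half_sub]
      congr 2
      push_cast
      have hNne : (N : ℝ) ≠ 0 := by positivity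
      field_simp
    rw [Finset.sum_congr rfl hrw, Finset.sum_sub_distrib, ← Finset.sum_div, ← Finset.sum_div,
      cos_sum_zero N (2 * l) hN0 hdvd2, Finset.sum_const, Nat.card_Icc]
    simp
  have hCpos : 0 < N.choose m := Nat.choose_pos hm2
  have hC : ((N.choose m : ℝ)) ≠ 0 := by positivity
  have hN1 : (N : ℝ) - 1 ≠ 0 := by
    have : (2 : ℝ) ≤ (N : ℝ) := by exact_mod_cast hN
    linarith
  rcases eq_or_lt_of_le hm1 with h1 | h2
  · -- m = 1
    subst h1
    rw [Finset.powersetCard_one, Finset.sum_map]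
    simp only [Function.Embedding.coeFn_mk, Finset.sum_singleton]
    rw [hB, Nat.choose_one_right]
    have hNr : (N : ℝ) ≠ 0 := by positivity
    push_cast
    field_simp
  · -- 2 ≤ m
    have hm' : 2 ≤ m := h2
    have hcard : (Finset.Icc 1 N).card = N := by rw [Nat.card_Icc]; omega
    rw [key_sum_sq (Finset.Icc 1 N) hm'
      (fun n => Real.sin (2 * Real.pi * (n : ℝ) * (l : ℝ) / (N : ℝ))), hA, hB, hcard]
    -- Nat choose identities, cast to ℝ
    have h1nat := Nat.add_one_mul_choose_eq (N - 1) (m - 1)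
    have e1 : N - 1 + 1 = N := by omega
    have e2 : m - 1 + 1 = m := by omega
    simp only [Nat.succ_eq_add_one, e1, e2] at h1nat
    -- h1nat : N * (N-1).choose (m-1) = N.choose m * m
    have h2nat := Nat.add_one_mul_choose_eq (N - 2) (m - 2)
    have e3 : N - 2 + 1 = N - 1 := by omega
    have e4 : m - 2 + 1 = m - 1 := by omega
    simp only [Nat.succ_eq_add_one, e3, e4] at h2nat
    -- h2nat : (N-1) * (N-2).choose (m-2) = (N-1).choose (m-1) * (m-1)
    have r1 : (N : ℝ) * ((N - 1).choose (m - 1) : ℝ) = (N.choose m : ℝ) * (m : ℝ) := by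
      exact_mod_cast h1nat
    have r2 : ((N : ℝ) - 1) * ((N - 2).choose (m - 2) : ℝ)
        = ((N - 1).choose (m - 1) : ℝ) * ((m : ℝ) - 1) := by
      have := h2nat
      have c1 : ((N - 1 : ℕ) : ℝ) = (N : ℝ) - 1 := by
        rw [Nat.cast_sub (by omega)]; norm_num
      have c2 : ((m - 1 : ℕ) : ℝ) = (m : ℝ) - 1 := by
        rw [Nat.cast_sub (by omega)]; norm_num
      calc ((N : ℝ) - 1) * ((N - 2).choose (m - 2) : ℝ)
          = ((N - 1 : ℕ) : ℝ) * ((N - 2).choose (m - 2) : ℝ) := by rw [c1]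
        _ = ((N - 1).choose (m - 1) : ℝ) * ((m - 1 : ℕ) : ℝ) := by exact_mod_cast this
        _ = ((N - 1).choose (m - 1) : ℝ) * ((m : ℝ) - 1) := by rw [c2]
    have hNr : (N : ℝ) ≠ 0 := by positivity
    have key2 : ((N : ℝ) * ((N : ℝ) - 1)) * (((N - 1).choose (m - 1) : ℝ)
          - ((N - 2).choose (m - 2) : ℝ))
        = (m : ℝ) * ((N : ℝ) - (m : ℝ)) * (N.choose m : ℝ) := by
      linear_combination ((N : ℝ) - (m : ℝ)) * r1 - (N : ℝ) * r2
    field_simp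
    linear_combination key2
end

section
/- Let N, l, m and k be positive integers with 1 ≤ l ≤ N−1 and 1 ≤ m ≤ N. If k is not divisible by N/gcd(N,l), then the k-th moment of X_l(m,N) vanishes: E[(X_l(m,N))^k] = (1/C(N,m)) · Σ_{S ⊆ {1,…,N}, |S| = m} (Σ_{n∈S} w^n)^k = 0. -/
open Finset

/-- For positive integers `N, l, m, k` with `1 ≤ l ≤ N-1`, `1 ≤ m ≤ N`,
if `k` is not divisible by `N / gcd(N,l)`, then the `k`-th moment of `X_l(m,N)` vanishes:
`(1/C(N,m)) · ∑_{S, |S|=m} (∑_{n∈S} w^n)^k = 0` with `w = exp(-2πi·l/N)`. -/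
theorem stmt_6 (N l m k : ℕ) (hl1 : 1 ≤ l) (hl2 : l ≤ N - 1)
    (hm1 : 1 ≤ m) (hm2 : m ≤ N) (hk : 1 ≤ k)
    (hdvd : ¬ (N / Nat.gcd N l ∣ k)) :
    (1 / (N.choose m) : ℂ) *
        ∑ S ∈ (Finset.Icc 1 N).powersetCard m,
          (∑ n ∈ S, Complex.exp (-2 * (Real.pi : ℂ) * Complex.I * (l : ℂ) / (N : ℂ)) ^ n) ^ k
      = 0 := by
  have hN : 2 ≤ N := by omega
  have hN0 : (N : ℂ) ≠ 0 := by exact Nat.cast_ne_zero.mpr (by omega)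
  set w : ℂ := Complex.exp (-2 * (Real.pi : ℂ) * Complex.I * (l : ℂ) / (N : ℂ)) with hw
  -- w ^ N = 1
  have hwN : w ^ N = 1 := by
    rw [hw, ← Complex.exp_nat_mul]
    have h1 : (N : ℂ) * (-2 * (Real.pi : ℂ) * Complex.I * (l : ℂ) / (N : ℂ))
        = ((-(l : ℤ)) : ℤ) * (2 * (Real.pi : ℂ) * Complex.I) := by
      field_simp
      simp
    rw [h1, Complex.exp_int_mul_two_pi_mul_I]
  -- w ^ k ≠ 1
  have hwk : w ^ k ≠ 1 := by
    intro h
    rw [hw, ← Complex.exp_nat_mul, Complex.exp_eq_one_iff] at h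
    obtain ⟨n, hn⟩ := h
    have h2 : (2 * (Real.pi : ℂ) * Complex.I) ≠ 0 := by
      simp [Complex.I_ne_zero, Real.pi_ne_zero]
    have key : ((k : ℂ) * l) * (2 * (Real.pi : ℂ) * Complex.I)
        = ((-n : ℤ) : ℂ) * N * (2 * (Real.pi : ℂ) * Complex.I) := by
      push_cast
      field_simp at hn
      linear_combination (-(2 * (Real.pi : ℂ) * Complex.I)) * hn
    have key2 : ((k : ℂ) * l) = ((-n : ℤ) : ℂ) * N := mul_right_cancel₀ h2 key
    have key3 : ((k * l : ℕ) : ℤ) = -n * N := by exact_mod_cast key2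
    have hNdvd : (N : ℤ) ∣ ((k * l : ℕ) : ℤ) := ⟨-n, by linarith⟩
    have hNdvd' : N ∣ k * l := by exact_mod_cast hNdvd
    -- conclude N / gcd N l ∣ k
    set g := Nat.gcd N l with hg
    have hgpos : 0 < g := Nat.gcd_pos_of_pos_left l (by omega)
    have hco : Nat.Coprime (N / g) (l / g) := Nat.coprime_div_gcd_div_gcd hgpos
    obtain ⟨t, ht⟩ := hNdvd'
    have hNg : g * (N / g) = N := Nat.mul_div_cancel' (Nat.gcd_dvd_left N l)
    have hlg : g * (l / g) = l := Nat.mul_div_cancel' (Nat.gcd_dvd_right N l)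
    have hdd : (N / g) ∣ k * (l / g) := by
      refine ⟨t, ?_⟩
      have : g * (k * (l / g)) = g * ((N / g) * t) := by
        calc g * (k * (l / g)) = k * (g * (l / g)) := by ring
        _ = k * l := by rw [hlg]
        _ = N * t := ht
        _ = (g * (N / g)) * t := by rw [hNg]
        _ = g * ((N / g) * t) := by ring
      exact Nat.eq_of_mul_eq_mul_left hgpos this
    exact hdvd (hco.dvd_of_dvd_mul_right hdd)
  -- the shift maps
  set σf : ℕ → ℕ := fun n => n % N + 1 with hσ
  set τf : ℕ → ℕ := fun n => (n + N - 2) % N + 1 with hτ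
  have hσval : ∀ n, 1 ≤ n → n ≤ N → σf n = if n = N then 1 else n + 1 := by
    intro n h1 h2
    simp only [hσ]
    split
    · next h => rw [h, Nat.mod_self]
    · next h => rw [Nat.mod_eq_of_lt (by omega)]
  have hτval : ∀ n, 1 ≤ n → n ≤ N → τf n = if n = 1 then N else n - 1 := by
    intro n h1 h2
    simp only [hτ]
    split
    · next h =>
        rw [h]
        have h3 : 1 + N - 2 = N - 1 := by omega
        rw [h3, Nat.mod_eq_of_lt (by omega)]
        omega
    · next h =>
        have h3 : n + N - 2 = N + (n - 2) := by omega
        rw [h3, Nat.add_mod_left, Nat.mod_eq_of_lt (by omega)]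
        omega
  have hτσ : ∀ n ∈ Icc 1 N, τf (σf n) = n := by
    intro n hn
    rw [mem_Icc] at hn
    rw [hσval n hn.1 hn.2]
    by_cases h : n = N
    · subst h
      rw [if_pos rfl, hτval 1 le_rfl (by omega)]
      simp
    · simp only [if_neg h]
      rw [hτval (n + 1) (by omega) (by omega)]
      have : ¬ (n + 1 = 1) := by omega
      simp only [if_neg this]
      omega
  have hστ : ∀ n ∈ Icc 1 N, σf (τf n) = n := by
    intro n hn
    rw [mem_Icc] at hn
    rw [hτval n hn.1 hn.2]
    by_cases h : n = 1
    · subst h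
      rw [if_pos rfl, hσval N (by omega) le_rfl]
      simp
    · simp only [if_neg h]
      rw [hσval (n - 1) (by omega) (by omega)]
      have : ¬ (n - 1 = N) := by omega
      simp only [if_neg this]
      omega
  have hσmem : ∀ n ∈ Icc 1 N, σf n ∈ Icc 1 N := by
    intro n hn
    rw [mem_Icc]
    have := Nat.mod_lt n (show 0 < N by omega)
    simp only [hσ]
    omega
  have hτmem : ∀ n ∈ Icc 1 N, τf n ∈ Icc 1 N := by
    intro n hn
    rw [mem_Icc]
    have := Nat.mod_lt (n + N - 2) (show 0 < N by omega)
    simp only [hτ]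
    omega
  set P := (Finset.Icc 1 N).powersetCard m with hP
  have hinj : ∀ S : Finset ℕ, S ⊆ Icc 1 N → ∀ x ∈ S, ∀ y ∈ S, σf x = σf y → x = y := by
    intro S hS x hx y hy hxy
    have h1 := hτσ x (hS hx)
    have h2 := hτσ y (hS hy)
    rw [← h1, ← h2, hxy]
  have himgmem : ∀ S ∈ P, S.image σf ∈ P := by
    intro S hS
    rw [hP, mem_powersetCard] at hS ⊢
    constructor
    · intro x hx
      rw [mem_image] at hx
      obtain ⟨y, hy, rfl⟩ := hx
      exact hσmem y (hS.1 hy)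
    · rw [Finset.card_image_of_injOn (fun x hx y hy => hinj S hS.1 x hx y hy), hS.2]
  have himginv : ∀ S : Finset ℕ, S ⊆ Icc 1 N → (S.image σf).image τf = S := by
    intro S hS
    rw [Finset.image_image]
    calc S.image (τf ∘ σf) = S.image id := Finset.image_congr (fun x hx => hτσ x (hS hx))
    _ = S := Finset.image_id
  have himginv' : ∀ S : Finset ℕ, S ⊆ Icc 1 N → (S.image τf).image σf = S := by
    intro S hS
    rw [Finset.image_image]
    calc S.image (σf ∘ τf) = S.image id := Finset.image_congr (fun x hx => hστ x (hS hx))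
    _ = S := Finset.image_id
  have hτimgmem : ∀ S ∈ P, S.image τf ∈ P := by
    intro S hS
    rw [hP, mem_powersetCard] at hS ⊢
    constructor
    · intro x hx
      rw [mem_image] at hx
      obtain ⟨y, hy, rfl⟩ := hx
      exact hτmem y (hS.1 hy)
    · rw [Finset.card_image_of_injOn, hS.2]
      intro x hx y hy hxy
      have h1 := hστ x (hS.1 hx)
      have h2 := hστ y (hS.1 hy)
      rw [← h1, ← h2, hxy]
  -- key sum identity
  have hkey : ∀ S ∈ P, ∑ n ∈ S.image σf, w ^ n = w * ∑ n ∈ S, w ^ n := by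
    intro S hS
    rw [hP, mem_powersetCard] at hS
    rw [Finset.sum_image (hinj S hS.1), Finset.mul_sum]
    apply Finset.sum_congr rfl
    intro n hn
    show w ^ (n % N + 1) = w * w ^ n
    rw [pow_succ, ← pow_eq_pow_mod n hwN, mul_comm]
  set T := ∑ S ∈ P, (∑ n ∈ S, w ^ n) ^ k with hT
  have hTfix : w ^ k * T = T := by
    calc w ^ k * T = ∑ S ∈ P, (w * ∑ n ∈ S, w ^ n) ^ k := by
          rw [hT, Finset.mul_sum]
          exact Finset.sum_congr rfl (fun S hS => (mul_pow _ _ _).symm)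
      _ = ∑ S ∈ P, (∑ n ∈ S.image σf, w ^ n) ^ k := by
          exact Finset.sum_congr rfl (fun S hS => by rw [hkey S hS])
      _ = T := by
          rw [hT]
          refine Finset.sum_nbij' (fun S => S.image σf) (fun S => S.image τf)
            himgmem hτimgmem ?_ ?_ ?_
          · intro S hS
            exact himginv S ((mem_powersetCard.mp (hP ▸ hS)).1)
          · intro S hS
            exact himginv' S ((mem_powersetCard.mp (hP ▸ hS)).1)
          · intro S hS
            rfl
  have hT0 : T = 0 := by
    have : (w ^ k - 1) * T = 0 := by rw [sub_mul, one_mul, hTfix, sub_self]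
    rcases mul_eq_zero.mp this with h | h
    · exact absurd (sub_eq_zero.mp h) hwk
    · exact h
  rw [hT0, mul_zero]
end

section
/- Let m be an arbitrary positive integer. Then Σ_{k=0}^{m} (2k−m)² · C(m,k)² = 2m · C(2m−2, m−1). -/
/-!
Writing `m = n + 1`, absorption and Pascal's rule give
`(2k - m) C(m, k) = m (C(n, k - 1) - C(n, k))`, so the sum is `m²` times the squared
length of the first difference of row `n` of Pascal's triangle. Vandermonde's identity
evaluates that as `2 (C(2n, n) - C(2n, n + 1))`, which is `2 C(2n, n) / m`.
-/

open Finset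

namespace Nat

theorem sum_range_choose_mul_choose_succ (n : ℕ) :
    ∑ i ∈ range (n + 1), n.choose i * n.choose (i + 1) = (2 * n).choose (n + 1) := by
  rw [two_mul, add_choose_eq, Nat.sum_antidiagonal_eq_sum_range_succ_mk, sum_range_succ' _ (n + 1)]
  simp only [Nat.sub_zero, choose_succ_self, mul_zero, add_zero, Nat.add_sub_add_right]
  refine sum_congr rfl fun i hi => ?_
  rw [choose_symm (mem_range_succ_iff.mp hi), mul_comm]

theorem sum_range_choose_succ_sq_add_one (n : ℕ) :
    ∑ i ∈ range (n + 1), n.choose (i + 1) ^ 2 + 1 = (2 * n).choose n := by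
  rw [← sum_range_choose_sq, sum_range_succ, sum_range_succ' (fun i => n.choose i ^ 2)]
  simp

theorem sum_range_choose_sub_choose_succ_sq_add_one (n : ℕ) :
    ∑ i ∈ range (n + 1), ((n.choose i : ℤ) - n.choose (i + 1)) ^ 2 + 1
      = 2 * ((2 * n).choose n - (2 * n).choose (n + 1)) := by
  have hsq : ∑ i ∈ range (n + 1), (n.choose i : ℤ) ^ 2 = (2 * n).choose n := by
    exact_mod_cast sum_range_choose_sq n
  have hsq_succ : ∑ i ∈ range (n + 1), (n.choose (i + 1) : ℤ) ^ 2 + 1 = (2 * n).choose n := by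
    exact_mod_cast sum_range_choose_succ_sq_add_one n
  have hmul : ∑ i ∈ range (n + 1), (n.choose i : ℤ) * n.choose (i + 1)
      = (2 * n).choose (n + 1) := by
    exact_mod_cast sum_range_choose_mul_choose_succ n
  simp only [sub_sq, sum_add_distrib, sum_sub_distrib, mul_assoc, ← mul_sum]
  linear_combination hsq + hsq_succ - 2 * hmul

theorem two_mul_sub_mul_choose_succ (n k : ℕ) :
    (2 * ((k + 1 : ℕ) : ℤ) - (n + 1 : ℕ)) * (n + 1).choose (k + 1)
      = (n + 1 : ℕ) * ((n.choose k : ℤ) - n.choose (k + 1)) := by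
  have habsorb : ((n + 1 : ℕ) : ℤ) * n.choose k = (n + 1).choose (k + 1) * (k + 1 : ℕ) := by
    exact_mod_cast add_one_mul_choose_eq n k
  have hpascal : ((n + 1).choose (k + 1) : ℤ) = n.choose k + n.choose (k + 1) := by
    exact_mod_cast choose_succ_succ n k
  linear_combination -2 * habsorb - ((n + 1 : ℕ) : ℤ) * hpascal

theorem add_one_mul_choose_two_mul_add_one (n : ℕ) :
    (n + 1) * (2 * n).choose (n + 1) = n * (2 * n).choose n := by
  rw [mul_comm, choose_succ_right_eq, two_mul, Nat.add_sub_cancel, mul_comm]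

end Nat

open Nat in
theorem stmt_13_general (m : ℕ) :
    ∑ k ∈ Finset.range (m + 1),
        (2 * (k : ℤ) - (m : ℤ)) ^ 2 * (m.choose k : ℤ) ^ 2
      = 2 * (m : ℤ) * ((2 * m - 2).choose (m - 1) : ℤ) := by
  cases m with
  | zero => simp
  | succ n =>
    have hterm : ∀ k ∈ range (n + 1),
        (2 * ((k + 1 : ℕ) : ℤ) - (n + 1 : ℕ)) ^ 2 * ((n + 1).choose (k + 1) : ℤ) ^ 2
          = ((n + 1 : ℕ) : ℤ) ^ 2 * ((n.choose k : ℤ) - n.choose (k + 1)) ^ 2 := fun k _ => by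
      rw [← mul_pow, ← mul_pow, two_mul_sub_mul_choose_succ]
    have hcentral : ((n : ℤ) + 1) * (2 * n).choose (n + 1) = n * (2 * n).choose n := by
      exact_mod_cast add_one_mul_choose_two_mul_add_one n
    rw [sum_range_succ', sum_congr rfl hterm, ← mul_sum, show 2 * (n + 1) - 2 = 2 * n by omega,
      Nat.add_sub_cancel, choose_zero_right]
    push_cast
    linear_combination ((n : ℤ) + 1) ^ 2 * sum_range_choose_sub_choose_succ_sq_add_one n
      - 2 * ((n : ℤ) + 1) * hcentral

/-- For every positive integer `m`:
`∑_{k=0}^{m} (2k-m)² · C(m,k)² = 2m · C(2m-2, m-1)`. -/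
theorem stmt_13 (m : ℕ) (hm : 1 ≤ m) :
    ∑ k ∈ Finset.range (m + 1),
        (2 * (k : ℤ) - (m : ℤ)) ^ 2 * (m.choose k : ℤ) ^ 2
      = 2 * (m : ℤ) * ((2 * m - 2).choose (m - 1) : ℤ) :=
  stmt_13_general m
end

section
/- Let l and m be positive integers with 1 ≤ m ≤ 2l. Then Σ_{k=0}^{m} (2k−m)² · C(l,k) · C(l,m−k) = (m(2l−m)/(2l−1)) · C(2l,m), where the binomial coefficients C(l,k) and C(l,m−k) are zero when k > l or m−k > l respectively. -/
open Finset

lemma vand (a b n : ℕ) :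
    ∑ k ∈ range (n + 1), a.choose k * b.choose (n - k) = (a + b).choose n := by
  rw [Nat.add_choose_eq,
    Finset.Nat.sum_antidiagonal_eq_sum_range_succ (fun i j => a.choose i * b.choose j)]

lemma sumB (a b n : ℕ) (ha : 1 ≤ a) (hn : 1 ≤ n) :
    ∑ k ∈ range (n + 1), k * a.choose k * b.choose (n - k)
      = a * (a - 1 + b).choose (n - 1) := by
  obtain ⟨a, rfl⟩ : ∃ a', a = a' + 1 := ⟨a - 1, (Nat.succ_pred_eq_of_pos ha).symm⟩
  obtain ⟨n, rfl⟩ : ∃ n', n = n' + 1 := ⟨n - 1, (Nat.succ_pred_eq_of_pos hn).symm⟩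
  simp only [Nat.add_sub_cancel]
  rw [Finset.sum_range_succ']
  simp only [Nat.zero_mul, add_zero]
  have step : ∀ i ∈ range (n+1), (i+1) * (a+1).choose (i+1) * b.choose (n+1-(i+1))
      = (a+1) * (a.choose i * b.choose (n - i)) := by
    intro i _
    have h := Nat.add_one_mul_choose_eq a i
    rw [Nat.succ_sub_succ, mul_comm (i+1), ← h]; ring
  rw [Finset.sum_congr rfl step, ← Finset.mul_sum, vand]

lemma sumC (a b n : ℕ) (ha : 1 ≤ a) (hn : 2 ≤ n) :
    ∑ k ∈ range (n + 1), k * (k - 1) * a.choose k * b.choose (n - k)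
      = a * (a - 1) * (a - 2 + b).choose (n - 2) := by
  obtain ⟨a, rfl⟩ : ∃ a', a = a' + 1 := ⟨a - 1, (Nat.succ_pred_eq_of_pos ha).symm⟩
  obtain ⟨n, rfl⟩ : ∃ n', n = n' + 1 := ⟨n - 1, (Nat.succ_pred_eq_of_pos (by omega)).symm⟩
  rw [Finset.sum_range_succ']
  simp only [Nat.zero_mul, add_zero, Nat.add_sub_cancel]
  have step : ∀ i ∈ range (n+1), (i+1) * i * (a+1).choose (i+1) * b.choose (n+1-(i+1))
      = (a+1) * (i * a.choose i * b.choose (n - i)) := by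
    intro i _
    have h := Nat.add_one_mul_choose_eq a i
    rw [Nat.succ_sub_succ]
    rw [mul_comm (i+1) i, mul_assoc i (i+1), mul_comm (i+1), ← h]
    ring
  rw [Finset.sum_congr rfl step, ← Finset.mul_sum]
  rcases Nat.eq_zero_or_pos a with rfl | hpa
  · have : ∀ i ∈ range (n+1), i * Nat.choose 0 i * b.choose (n - i) = 0 := by
      intro i _
      rcases Nat.eq_zero_or_pos i with rfl | hi
      · simp
      · rw [Nat.choose_eq_zero_of_lt hi]; ring
    rw [Finset.sum_congr rfl this]
    simp
  · rw [sumB a b n hpa (by omega)]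
    have h2 : a + 1 - 2 = a - 1 := by omega
    have h3 : n + 1 - 2 = n - 1 := by omega
    rw [h2, h3]
    ring

/-- For positive integers `l, m` with `1 ≤ m ≤ 2l`:
`∑_{k=0}^{m} (2k-m)² · C(l,k) · C(l,m-k) = (m(2l-m)/(2l-1)) · C(2l,m)`,
with the convention `C(a,b) = 0` when `b > a`. -/
theorem stmt_14 (l m : ℕ) (hl : 1 ≤ l) (hm1 : 1 ≤ m) (hm2 : m ≤ 2 * l) :
    ∑ k ∈ Finset.range (m + 1),
        (2 * (k : ℚ) - (m : ℚ)) ^ 2 * (l.choose k : ℚ) * (l.choose (m - k) : ℚ)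
      = (m : ℚ) * (2 * (l : ℚ) - (m : ℚ)) / (2 * (l : ℚ) - 1) * ((2 * l).choose m : ℚ) := by
  have hD : (2 * (l:ℚ) - 1) ≠ 0 := by
    have : (1:ℚ) ≤ l := by exact_mod_cast hl
    nlinarith
  rcases eq_or_lt_of_le hm1 with rfl | hm2'
  · -- m = 1
    simp only [Finset.sum_range_succ, Finset.sum_range_zero]
    norm_num [Nat.choose_one_right]
    field_simp
    rw [mul_div_assoc, div_self (by rwa [mul_comm] at hD)]; norm_num
  · -- m ≥ 2
    have hm2'' : 2 ≤ m := hm2'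
    rcases eq_or_lt_of_le hl with rfl | hl2'
    · -- l = 1, so m = 2
      interval_cases m
      norm_num [Finset.sum_range_succ]
    · have hl2 : 2 ≤ l := hl2'
      have hA := sumC l l m hl hm2''
      have hB := sumB l l m hl hm1
      have hV := vand l l m
      have e1 : l - 2 + l = 2 * l - 2 := by omega
      have e2 : l - 1 + l = 2 * l - 1 := by omega
      have e3 : l + l = 2 * l := by omega
      rw [e1] at hA; rw [e2] at hB; rw [e3] at hV
      have key : ∀ k ∈ Finset.range (m + 1),
          (2 * (k : ℚ) - (m : ℚ)) ^ 2 * (l.choose k : ℚ) * (l.choose (m - k) : ℚ)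
            = 4 * ((k * (k-1) * l.choose k * l.choose (m - k) : ℕ) : ℚ)
              + (4 - 4 * (m:ℚ)) * ((k * l.choose k * l.choose (m - k) : ℕ) : ℚ)
              + (m:ℚ)^2 * ((l.choose k * l.choose (m - k) : ℕ) : ℚ) := by
        intro k _
        rcases Nat.eq_zero_or_pos k with rfl | hk1
        · push_cast; ring
        · push_cast [Nat.cast_sub hk1]; ring
      rw [Finset.sum_congr rfl key, Finset.sum_add_distrib, Finset.sum_add_distrib,
        ← Finset.mul_sum, ← Finset.mul_sum, ← Finset.mul_sum,
        ← Nat.cast_sum, ← Nat.cast_sum, ← Nat.cast_sum, hA, hB, hV]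
      -- choose relations
      have r1 := Nat.add_one_mul_choose_eq (2*l - 1) (m - 1)
      have r2 := Nat.add_one_mul_choose_eq (2*l - 2) (m - 2)
      have f1 : 2*l - 1 + 1 = 2*l := by omega
      have f2 : m - 1 + 1 = m := by omega
      have f3 : 2*l - 2 + 1 = 2*l - 1 := by omega
      have f4 : m - 2 + 1 = m - 1 := by omega
      simp only [Nat.succ_eq_add_one, f1, f2, f3, f4] at r1 r2
      have q1 : (2*l : ℚ) * ((2*l - 1).choose (m-1) : ℚ) = ((2*l).choose m : ℚ) * m := by
        exact_mod_cast congrArg (Nat.cast : ℕ → ℚ) r1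
      have q2 : ((2*l : ℚ) - 1) * ((2*l - 2).choose (m-2) : ℚ)
          = ((2*l - 1).choose (m-1) : ℚ) * ((m:ℚ) - 1) := by
        have := congrArg (Nat.cast : ℕ → ℚ) r2
        push_cast [Nat.cast_sub (show 1 ≤ 2*l by omega), Nat.cast_sub (show 1 ≤ m by omega)] at this ⊢
        linarith
      have hz : (2 * (l:ℚ)) ≠ 0 := by positivity
      push_cast [Nat.cast_sub hl]
      set x := ((2*l - 2).choose (m-2) : ℚ)
      set y := ((2*l - 1).choose (m-1) : ℚ)
      set z := ((2*l).choose m : ℚ)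
      have hy : y = (m:ℚ) * z / (2*l) := by
        rw [eq_div_iff hz]; linarith
      have hx : x = ((m:ℚ) - 1) * y / (2*(l:ℚ) - 1) := by
        rw [eq_div_iff hD]; linarith
      rw [hx, hy]
      field_simp [show (l:ℚ) * 2 - 1 ≠ 0 by rwa [mul_comm] at hD]
      ring
end

section
/- Let l and m be positive integers with 1 ≤ m ≤ 6l. Then Σ (2m₁−2m₂+m₃−m₄)² · C(l,m₁) · C(l,m₂) · C(2l,m₃) · C(2l,m₄) = (2m(6l−m)/(6l−1)) · C(6l,m), where the summation ranges over all quadruples of nonnegative integers (m₁, m₂, m₃, m₄) with m₁+m₂+m₃+m₄ = m. -/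
open Finset

lemma cast_choose_mul_succ (t k : ℕ) :
    ((k:ℚ)+1) * (t.choose (k+1) : ℚ) = (t:ℚ) * ((t-1).choose k : ℚ) := by
  cases t with
  | zero => simp
  | succ t' =>
    have h2 : ((t'+1) * Nat.choose t' k : ℕ) = (Nat.choose (t'+1) (k+1) * (k+1) : ℕ) :=
      Nat.add_one_mul_choose_eq t' k
    simp only [Nat.add_sub_cancel]
    have h3 : (((t'+1) * Nat.choose t' k : ℕ) : ℚ) = ((Nat.choose (t'+1) (k+1) * (k+1) : ℕ) : ℚ) := by
      exact_mod_cast congrArg (Nat.cast : ℕ → ℚ) h2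
    push_cast at h3
    push_cast
    linarith [h3]

lemma shiftL (g : ℕ × ℕ → ℚ) (hg : ∀ j, g (0, j) = 0) (n : ℕ) :
    ∑ p ∈ Finset.HasAntidiagonal.antidiagonal (n+1), g p = ∑ p ∈ Finset.HasAntidiagonal.antidiagonal n, g (p.1+1, p.2) := by
  rw [Finset.Nat.antidiagonal_succ, Finset.sum_cons, hg, zero_add, Finset.sum_map]
  apply Finset.sum_congr rfl
  intro p _
  rcases p with ⟨a,b⟩
  rfl

lemma shiftR (g : ℕ × ℕ → ℚ) (hg : ∀ j, g (j, 0) = 0) (n : ℕ) :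
    ∑ p ∈ Finset.HasAntidiagonal.antidiagonal (n+1), g p = ∑ p ∈ Finset.HasAntidiagonal.antidiagonal n, g (p.1, p.2+1) := by
  rw [Finset.Nat.antidiagonal_succ', Finset.sum_cons, hg, zero_add, Finset.sum_map]
  apply Finset.sum_congr rfl
  intro p _
  rcases p with ⟨a,b⟩
  rfl

lemma E0q (t u n : ℕ) :
    ∑ p ∈ Finset.HasAntidiagonal.antidiagonal n, (t.choose p.1 : ℚ) * (u.choose p.2 : ℚ)
      = ((t+u).choose n : ℚ) := by
  rw [Nat.add_choose_eq]
  push_cast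
  ring_nf

lemma R1a (t u n : ℕ) :
    ∑ p ∈ Finset.HasAntidiagonal.antidiagonal (n+1), (p.1:ℚ) * (t.choose p.1 : ℚ) * (u.choose p.2 : ℚ)
      = (t:ℚ) * (((t-1)+u).choose n : ℚ) := by
  rw [shiftL (fun p => (p.1:ℚ) * (t.choose p.1 : ℚ) * (u.choose p.2 : ℚ)) (by simp) n]
  rw [show (∑ p ∈ Finset.HasAntidiagonal.antidiagonal n, ((p.1+1 : ℕ):ℚ) * (t.choose (p.1+1) : ℚ) * (u.choose p.2 : ℚ))
      = ∑ p ∈ Finset.HasAntidiagonal.antidiagonal n, (t:ℚ) * (((t-1).choose p.1 : ℚ) * (u.choose p.2 : ℚ)) from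
    Finset.sum_congr rfl fun p _ => by
      push_cast
      rw [mul_assoc, ← mul_assoc ((p.1:ℚ)+1), cast_choose_mul_succ t p.1]
      ring]
  rw [← Finset.mul_sum, E0q]

lemma R1b (t u n : ℕ) :
    ∑ p ∈ Finset.HasAntidiagonal.antidiagonal (n+1), (p.2:ℚ) * (t.choose p.1 : ℚ) * (u.choose p.2 : ℚ)
      = (u:ℚ) * ((t+(u-1)).choose n : ℚ) := by
  rw [shiftR (fun p => (p.2:ℚ) * (t.choose p.1 : ℚ) * (u.choose p.2 : ℚ)) (by simp) n]
  rw [show (∑ p ∈ Finset.HasAntidiagonal.antidiagonal n, ((p.2+1 : ℕ):ℚ) * (t.choose p.1 : ℚ) * (u.choose (p.2+1) : ℚ))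
      = ∑ p ∈ Finset.HasAntidiagonal.antidiagonal n, (u:ℚ) * ((t.choose p.1 : ℚ) * ((u-1).choose p.2 : ℚ)) from
    Finset.sum_congr rfl fun p _ => by
      push_cast
      have := cast_choose_mul_succ u p.2
      nlinarith [this]]
  rw [← Finset.mul_sum, E0q]

lemma R11 (t u n : ℕ) :
    ∑ p ∈ Finset.HasAntidiagonal.antidiagonal (n+2), (p.1:ℚ) * (p.2:ℚ) * (t.choose p.1 : ℚ) * (u.choose p.2 : ℚ)
      = (t:ℚ) * (u:ℚ) * (((t-1)+(u-1)).choose n : ℚ) := by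
  rw [show n+2 = (n+1)+1 from rfl,
    shiftL (fun p => (p.1:ℚ) * (p.2:ℚ) * (t.choose p.1 : ℚ) * (u.choose p.2 : ℚ)) (by simp) (n+1)]
  rw [show (∑ p ∈ Finset.HasAntidiagonal.antidiagonal (n+1), ((p.1+1 : ℕ):ℚ) * (p.2:ℚ) * (t.choose (p.1+1) : ℚ) * (u.choose p.2 : ℚ))
      = ∑ p ∈ Finset.HasAntidiagonal.antidiagonal (n+1), (t:ℚ) * ((p.2:ℚ) * (((t-1)).choose p.1 : ℚ) * (u.choose p.2 : ℚ)) from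
    Finset.sum_congr rfl fun p _ => by
      push_cast
      have := cast_choose_mul_succ t p.1
      linear_combination ((p.2:ℚ) * (u.choose p.2 : ℚ)) * this]
  rw [← Finset.mul_sum, R1b]
  ring

lemma R2a (t u n : ℕ) :
    ∑ p ∈ Finset.HasAntidiagonal.antidiagonal (n+2), (p.1:ℚ) * ((p.1:ℚ)-1) * (t.choose p.1 : ℚ) * (u.choose p.2 : ℚ)
      = (t:ℚ) * ((t-1:ℕ):ℚ) * (((t-1-1)+u).choose n : ℚ) := by
  rw [show n+2 = (n+1)+1 from rfl,
    shiftL (fun p => (p.1:ℚ) * ((p.1:ℚ)-1) * (t.choose p.1 : ℚ) * (u.choose p.2 : ℚ)) (by simp) (n+1)]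
  rw [show (∑ p ∈ Finset.HasAntidiagonal.antidiagonal (n+1), ((p.1+1 : ℕ):ℚ) * (((p.1+1:ℕ):ℚ)-1) * (t.choose (p.1+1) : ℚ) * (u.choose p.2 : ℚ))
      = ∑ p ∈ Finset.HasAntidiagonal.antidiagonal (n+1), (t:ℚ) * ((p.1:ℚ) * (((t-1)).choose p.1 : ℚ) * (u.choose p.2 : ℚ)) from
    Finset.sum_congr rfl fun p _ => by
      push_cast
      have := cast_choose_mul_succ t p.1
      linear_combination ((p.1:ℚ) * (u.choose p.2 : ℚ)) * this]
  rw [← Finset.mul_sum, R1a]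
  ring

lemma R2b (t u n : ℕ) :
    ∑ p ∈ Finset.HasAntidiagonal.antidiagonal (n+2), (p.2:ℚ) * ((p.2:ℚ)-1) * (t.choose p.1 : ℚ) * (u.choose p.2 : ℚ)
      = (u:ℚ) * ((u-1:ℕ):ℚ) * ((t+(u-1-1)).choose n : ℚ) := by
  rw [show n+2 = (n+1)+1 from rfl,
    shiftR (fun p => (p.2:ℚ) * ((p.2:ℚ)-1) * (t.choose p.1 : ℚ) * (u.choose p.2 : ℚ)) (by simp) (n+1)]
  rw [show (∑ p ∈ Finset.HasAntidiagonal.antidiagonal (n+1), ((p.2+1 : ℕ):ℚ) * (((p.2+1:ℕ):ℚ)-1) * (t.choose p.1 : ℚ) * (u.choose (p.2+1) : ℚ))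
      = ∑ p ∈ Finset.HasAntidiagonal.antidiagonal (n+1), (u:ℚ) * ((p.2:ℚ) * (t.choose p.1 : ℚ) * (((u-1)).choose p.2 : ℚ)) from
    Finset.sum_congr rfl fun p _ => by
      push_cast
      have := cast_choose_mul_succ u p.2
      linear_combination ((p.2:ℚ) * (t.choose p.1 : ℚ)) * this]
  rw [← Finset.mul_sum, R1b]
  ring

lemma succ_choose (T n : ℕ) (h : 1 ≤ T) :
    (T:ℚ) * ((T-1).choose n : ℚ) = ((n:ℚ)+1) * (T.choose (n+1) : ℚ) := by
  obtain ⟨T', rfl⟩ := Nat.exists_eq_add_of_le h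
  simp only [Nat.add_sub_cancel_left] at *
  have := Nat.add_one_mul_choose_eq T' n
  have h3 : ((Nat.succ T' * T'.choose n : ℕ) : ℚ) = (((T'+1).choose (n+1) * (n+1) : ℕ) : ℚ) := by
    exact_mod_cast congrArg (Nat.cast : ℕ → ℚ) this
  push_cast at h3 ⊢
  rw [show (1 + T' : ℕ) = T' + 1 from by omega]
  push_cast
  linarith [h3]

lemma key2 (T n : ℕ) (h : 2 ≤ T) :
    (T:ℚ) * ((T:ℚ)-1) * ((T-2).choose n : ℚ)
      = ((n:ℚ)+2) * ((n:ℚ)+1) * (T.choose (n+2) : ℚ) := by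
  have h1 := succ_choose T (n+1) (by omega)
  have h2 := succ_choose (T-1) n (by omega)
  have e1 : ((T-1:ℕ):ℚ) = (T:ℚ)-1 := by
    have : (1:ℕ) ≤ T := by omega
    push_cast [Nat.cast_sub this]
    ring
  have e2 : (T-1-1 : ℕ) = T-2 := by omega
  rw [e2, e1] at h2
  push_cast at h1 h2 ⊢
  linear_combination (T:ℚ) * h2 + ((n:ℚ)+1) * h1
-- fraction moments
lemma M1a (t u n : ℕ) (h : 1 ≤ t + u) :
    ∑ p ∈ Finset.HasAntidiagonal.antidiagonal n, (p.1:ℚ) * (t.choose p.1 : ℚ) * (u.choose p.2 : ℚ)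
      = (n:ℚ) * t / (t+u) * ((t+u).choose n : ℚ) := by
  cases n with
  | zero => simp
  | succ n =>
    rw [R1a]
    by_cases ht : t = 0
    · subst ht; simp
    have e : (t-1)+u = (t+u)-1 := by omega
    rw [e]
    have hs := succ_choose (t+u) n h
    have hT : ((t+u:ℕ):ℚ) ≠ 0 := Nat.cast_ne_zero.mpr (by omega)
    push_cast at hs hT ⊢
    field_simp
    linear_combination hs

lemma M1b (t u n : ℕ) (h : 1 ≤ t + u) :
    ∑ p ∈ Finset.HasAntidiagonal.antidiagonal n, (p.2:ℚ) * (t.choose p.1 : ℚ) * (u.choose p.2 : ℚ)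
      = (n:ℚ) * u / (t+u) * ((t+u).choose n : ℚ) := by
  cases n with
  | zero => simp
  | succ n =>
    rw [R1b]
    by_cases hu : u = 0
    · subst hu; simp
    have e : t+(u-1) = (t+u)-1 := by omega
    rw [e]
    have hs := succ_choose (t+u) n h
    have hT : ((t+u:ℕ):ℚ) ≠ 0 := Nat.cast_ne_zero.mpr (by omega)
    push_cast at hs hT ⊢
    field_simp
    linear_combination hs

lemma M11 (t u n : ℕ) (h : 2 ≤ t + u) :
    ∑ p ∈ Finset.HasAntidiagonal.antidiagonal n, (p.1:ℚ) * (p.2:ℚ) * (t.choose p.1 : ℚ) * (u.choose p.2 : ℚ)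
      = (n:ℚ) * ((n:ℚ)-1) * t * u / ((t+u) * ((t+u:ℚ)-1)) * ((t+u).choose n : ℚ) := by
  match n with
  | 0 => simp
  | 1 =>
    rw [show (1:ℕ) = 0+1 from rfl, Finset.Nat.antidiagonal_succ]
    simp
  | (n+2) =>
    rw [R11]
    by_cases ht : t = 0
    · subst ht; simp
    by_cases hu : u = 0
    · subst hu; simp
    have e : (t-1)+(u-1) = (t+u)-2 := by omega
    rw [e]
    have hk := key2 (t+u) n h
    have hT : ((t+u:ℕ):ℚ) ≠ 0 := Nat.cast_ne_zero.mpr (by omega)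
    have hT1 : ((t+u:ℕ):ℚ) - 1 ≠ 0 := by
      have : (2:ℚ) ≤ ((t+u:ℕ):ℚ) := by exact_mod_cast h
      intro hc; rw [sub_eq_zero] at hc; rw [hc] at this; norm_num at this
    push_cast at hk hT hT1 ⊢
    field_simp
    linear_combination hk

lemma M2a (t u n : ℕ) (h : 2 ≤ t + u) :
    ∑ p ∈ Finset.HasAntidiagonal.antidiagonal n, (p.1:ℚ) * ((p.1:ℚ)-1) * (t.choose p.1 : ℚ) * (u.choose p.2 : ℚ)
      = (n:ℚ) * ((n:ℚ)-1) * t * ((t:ℚ)-1) / ((t+u) * ((t+u:ℚ)-1)) * ((t+u).choose n : ℚ) := by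
  match n with
  | 0 => simp
  | 1 =>
    rw [show (1:ℕ) = 0+1 from rfl, Finset.Nat.antidiagonal_succ]
    simp
  | (n+2) =>
    rw [R2a]
    by_cases ht : t = 0
    · subst ht; simp
    by_cases ht1 : t = 1
    · subst ht1; simp
    have e : (t-1-1)+u = (t+u)-2 := by omega
    have e1 : ((t-1:ℕ):ℚ) = (t:ℚ)-1 := by
      have h1 : (1:ℕ) ≤ t := by omega
      push_cast [Nat.cast_sub h1]
      ring
    rw [e, e1]
    have hk := key2 (t+u) n h
    have hT : ((t+u:ℕ):ℚ) ≠ 0 := Nat.cast_ne_zero.mpr (by omega)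
    have hT1 : ((t+u:ℕ):ℚ) - 1 ≠ 0 := by
      have : (2:ℚ) ≤ ((t+u:ℕ):ℚ) := by exact_mod_cast h
      intro hc; rw [sub_eq_zero] at hc; rw [hc] at this; norm_num at this
    push_cast at hk hT hT1 ⊢
    field_simp
    linear_combination ((t:ℚ)-1) * hk

lemma M2b (t u n : ℕ) (h : 2 ≤ t + u) :
    ∑ p ∈ Finset.HasAntidiagonal.antidiagonal n, (p.2:ℚ) * ((p.2:ℚ)-1) * (t.choose p.1 : ℚ) * (u.choose p.2 : ℚ)
      = (n:ℚ) * ((n:ℚ)-1) * u * ((u:ℚ)-1) / ((t+u) * ((t+u:ℚ)-1)) * ((t+u).choose n : ℚ) := by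
  match n with
  | 0 => simp
  | 1 =>
    rw [show (1:ℕ) = 0+1 from rfl, Finset.Nat.antidiagonal_succ]
    simp
  | (n+2) =>
    rw [R2b]
    by_cases hu : u = 0
    · subst hu; simp
    by_cases hu1 : u = 1
    · subst hu1; simp
    have e : t+(u-1-1) = (t+u)-2 := by omega
    have e1 : ((u-1:ℕ):ℚ) = (u:ℚ)-1 := by
      have h1 : (1:ℕ) ≤ u := by omega
      push_cast [Nat.cast_sub h1]
      ring
    rw [e, e1]
    have hk := key2 (t+u) n h
    have hT : ((t+u:ℕ):ℚ) ≠ 0 := Nat.cast_ne_zero.mpr (by omega)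
    have hT1 : ((t+u:ℕ):ℚ) - 1 ≠ 0 := by
      have : (2:ℚ) ≤ ((t+u:ℕ):ℚ) := by exact_mod_cast h
      intro hc; rw [sub_eq_zero] at hc; rw [hc] at this; norm_num at this
    push_cast at hk hT hT1 ⊢
    field_simp
    linear_combination ((u:ℚ)-1) * hk

lemma combo (t u n : ℕ) (h : 2 ≤ t + u) (A B C D E F : ℚ) :
    ∑ p ∈ Finset.HasAntidiagonal.antidiagonal n,
      (A + B*(p.1:ℚ) + C*((p.1:ℚ)*((p.1:ℚ)-1)) + D*(p.2:ℚ) + E*((p.2:ℚ)*((p.2:ℚ)-1))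
        + F*((p.1:ℚ)*(p.2:ℚ))) * (t.choose p.1 : ℚ) * (u.choose p.2 : ℚ)
      = (A + B*((n:ℚ)*t/(t+u)) + C*((n:ℚ)*((n:ℚ)-1)*t*((t:ℚ)-1)/((t+u)*((t+u:ℚ)-1)))
         + D*((n:ℚ)*u/(t+u)) + E*((n:ℚ)*((n:ℚ)-1)*u*((u:ℚ)-1)/((t+u)*((t+u:ℚ)-1)))
         + F*((n:ℚ)*((n:ℚ)-1)*t*u/((t+u)*((t+u:ℚ)-1)))) * ((t+u).choose n : ℚ) := by
  have e : ∀ p ∈ Finset.HasAntidiagonal.antidiagonal n,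
      (A + B*(p.1:ℚ) + C*((p.1:ℚ)*((p.1:ℚ)-1)) + D*(p.2:ℚ) + E*((p.2:ℚ)*((p.2:ℚ)-1))
        + F*((p.1:ℚ)*(p.2:ℚ))) * (t.choose p.1 : ℚ) * (u.choose p.2 : ℚ)
      = A*((t.choose p.1 : ℚ) * (u.choose p.2 : ℚ))
        + B*((p.1:ℚ) * (t.choose p.1 : ℚ) * (u.choose p.2 : ℚ))
        + C*((p.1:ℚ) * ((p.1:ℚ)-1) * (t.choose p.1 : ℚ) * (u.choose p.2 : ℚ))
        + D*((p.2:ℚ) * (t.choose p.1 : ℚ) * (u.choose p.2 : ℚ))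
        + E*((p.2:ℚ) * ((p.2:ℚ)-1) * (t.choose p.1 : ℚ) * (u.choose p.2 : ℚ))
        + F*((p.1:ℚ) * (p.2:ℚ) * (t.choose p.1 : ℚ) * (u.choose p.2 : ℚ)) := fun p _ => by ring
  rw [Finset.sum_congr rfl e]
  simp only [Finset.sum_add_distrib, ← Finset.mul_sum]
  rw [E0q, M1a t u n (by omega), M2a t u n h, M1b t u n (by omega), M2b t u n h, M11 t u n h]
  ring

lemma AT_succ_sum (k n : ℕ) (F : (Fin (k+1) → ℕ) → ℚ) :
    ∑ v ∈ Finset.Nat.antidiagonalTuple (k+1) n, F v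
    = ∑ p ∈ Finset.HasAntidiagonal.antidiagonal n, ∑ w ∈ Finset.Nat.antidiagonalTuple k p.2, F (Fin.cons p.1 w) := by
  rw [show (∑ p ∈ Finset.HasAntidiagonal.antidiagonal n, ∑ w ∈ Finset.Nat.antidiagonalTuple k p.2, F (Fin.cons p.1 w)) = ∑ x ∈ (Finset.HasAntidiagonal.antidiagonal n).sigma (fun p => Finset.Nat.antidiagonalTuple k p.2), F (Fin.cons x.1.1 x.2) from (Finset.sum_sigma (Finset.HasAntidiagonal.antidiagonal n) (fun p => Finset.Nat.antidiagonalTuple k p.2) (fun x => F (Fin.cons x.1.1 x.2))).symm]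
  apply Finset.sum_nbij' (i := fun v => (⟨(v 0, ∑ i, Fin.tail v i), Fin.tail v⟩ : Σ _p : ℕ × ℕ, Fin k → ℕ))
    (j := fun x => Fin.cons x.1.1 x.2)
  · intro v hv
    rw [Finset.Nat.mem_antidiagonalTuple] at hv
    simp only [Finset.mem_sigma, Finset.HasAntidiagonal.mem_antidiagonal, Finset.Nat.mem_antidiagonalTuple]
    refine ⟨?_, trivial⟩
    rw [← hv, Fin.sum_univ_succ]
    rfl
  · intro x hx
    simp only [Finset.mem_sigma, Finset.HasAntidiagonal.mem_antidiagonal, Finset.Nat.mem_antidiagonalTuple] at hx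
    rw [Finset.Nat.mem_antidiagonalTuple, Fin.sum_univ_succ]
    simp only [Fin.cons_zero, Fin.cons_succ]
    omega
  · intro v hv
    simp [Fin.cons_self_tail]
  · intro x hx
    simp only [Finset.mem_sigma, Finset.HasAntidiagonal.mem_antidiagonal, Finset.Nat.mem_antidiagonalTuple] at hx
    obtain ⟨⟨a, b⟩, w⟩ := x
    simp only [Fin.cons_zero, Fin.tail_cons] at *
    have : ∑ i, w i = b := hx.2
    simp [this]
  · intro v hv
    simp [Fin.cons_self_tail]


set_option maxHeartbeats 1600000 in
/-- For positive integers `l, m` with `1 ≤ m ≤ 6l`: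
`∑_{m₁+m₂+m₃+m₄=m} (2m₁-2m₂+m₃-m₄)² · C(l,m₁)·C(l,m₂)·C(2l,m₃)·C(2l,m₄)
  = (2m(6l-m)/(6l-1)) · C(6l,m)`, the sum ranging over all quadruples of
nonnegative integers with `m₁+m₂+m₃+m₄ = m`. -/
theorem stmt_16 (l m : ℕ) (hl : 1 ≤ l) (hm1 : 1 ≤ m) (hm2 : m ≤ 6 * l) :
    ∑ v ∈ Finset.Nat.antidiagonalTuple 4 m,
        (2 * (v 0 : ℚ) - 2 * (v 1 : ℚ) + (v 2 : ℚ) - (v 3 : ℚ)) ^ 2 *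
          (l.choose (v 0) : ℚ) * (l.choose (v 1) : ℚ) *
          ((2 * l).choose (v 2) : ℚ) * ((2 * l).choose (v 3) : ℚ)
      = 2 * (m : ℚ) * (6 * (l : ℚ) - (m : ℚ)) / (6 * (l : ℚ) - 1) * ((6 * l).choose m : ℚ) := by
  have hl1 : (1:ℚ) ≤ (l:ℚ) := by exact_mod_cast hl
  have h4 : (4*(l:ℚ)) ≠ 0 := by positivity
  have h41 : 4*(l:ℚ)-1 ≠ 0 := by
    have : (0:ℚ) < 4*(l:ℚ)-1 := by linarith
    exact this.ne'
  have h5 : (5*(l:ℚ)) ≠ 0 := by positivity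
  have h51 : 5*(l:ℚ)-1 ≠ 0 := by
    have : (0:ℚ) < 5*(l:ℚ)-1 := by linarith
    exact this.ne'
  have h6 : (6*(l:ℚ)) ≠ 0 := by positivity
  have h61 : 6*(l:ℚ)-1 ≠ 0 := by
    have : (0:ℚ) < 6*(l:ℚ)-1 := by linarith
    exact this.ne'
  have h41' : (l:ℚ)*4-1 ≠ 0 := by rw [mul_comm]; exact h41
  have h51' : (l:ℚ)*5-1 ≠ 0 := by rw [mul_comm]; exact h51
  have h61' : (l:ℚ)*6-1 ≠ 0 := by rw [mul_comm]; exact h61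
  have h4' : (l:ℚ)*4 ≠ 0 := by rw [mul_comm]; exact h4
  have h5' : (l:ℚ)*5 ≠ 0 := by rw [mul_comm]; exact h5
  have h6' : (l:ℚ)*6 ≠ 0 := by rw [mul_comm]; exact h6
  -- Level 3 closed form
  have L3 : ∀ a b s : ℕ,
      ∑ x ∈ Finset.HasAntidiagonal.antidiagonal s,
        (2*(a:ℚ) - 2*(b:ℚ) + (x.1:ℚ) - (x.2:ℚ))^2 * ((2*l).choose x.1 : ℚ) * ((2*l).choose x.2 : ℚ)
      = ((2*(a:ℚ)-2*(b:ℚ))^2 + (s:ℚ)*(4*(l:ℚ)-(s:ℚ))/(4*(l:ℚ)-1)) * ((4*l).choose s : ℚ) := by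
    intro a b s
    have hpt : ∀ x ∈ Finset.HasAntidiagonal.antidiagonal s,
        (2*(a:ℚ) - 2*(b:ℚ) + (x.1:ℚ) - (x.2:ℚ))^2 * ((2*l).choose x.1 : ℚ) * ((2*l).choose x.2 : ℚ)
        = ((2*(a:ℚ)-2*(b:ℚ))^2 + (2*(2*(a:ℚ)-2*(b:ℚ))+1)*(x.1:ℚ)
            + 1*((x.1:ℚ)*((x.1:ℚ)-1)) + (-2*(2*(a:ℚ)-2*(b:ℚ))+1)*(x.2:ℚ)
            + 1*((x.2:ℚ)*((x.2:ℚ)-1)) + (-2)*((x.1:ℚ)*(x.2:ℚ)))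
            * ((2*l).choose x.1 : ℚ) * ((2*l).choose x.2 : ℚ) := fun x _ => by ring
    rw [Finset.sum_congr rfl hpt,
      combo (2*l) (2*l) s (by omega) ((2*(a:ℚ)-2*(b:ℚ))^2)
        (2*(2*(a:ℚ)-2*(b:ℚ))+1) 1 (-2*(2*(a:ℚ)-2*(b:ℚ))+1) 1 (-2),
      show 2*l+2*l = 4*l from by ring]
    push_cast
    rw [show (2*(l:ℚ)+2*(l:ℚ)) = 4*(l:ℚ) from by ring]
    field_simp
    ring
  -- Level 2 closed form
  have L2 : ∀ a r : ℕ,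
      ∑ q ∈ Finset.HasAntidiagonal.antidiagonal r,
        ((2*(a:ℚ)-2*(q.1:ℚ))^2 + (q.2:ℚ)*(4*(l:ℚ)-(q.2:ℚ))/(4*(l:ℚ)-1))
          * (l.choose q.1 : ℚ) * ((4*l).choose q.2 : ℚ)
      = (4*(a:ℚ)^2 - (8/5)*(a:ℚ)*(r:ℚ) + (8/5)*(r:ℚ)
          + (4*((l:ℚ)-2)/(5*(5*(l:ℚ)-1)))*((r:ℚ)*((r:ℚ)-1))) * ((5*l).choose r : ℚ) := by
    intro a r
    have hpt : ∀ q ∈ Finset.HasAntidiagonal.antidiagonal r,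
        ((2*(a:ℚ)-2*(q.1:ℚ))^2 + (q.2:ℚ)*(4*(l:ℚ)-(q.2:ℚ))/(4*(l:ℚ)-1))
          * (l.choose q.1 : ℚ) * ((4*l).choose q.2 : ℚ)
        = (4*(a:ℚ)^2 + (4-8*(a:ℚ))*(q.1:ℚ) + 4*((q.1:ℚ)*((q.1:ℚ)-1)) + 1*(q.2:ℚ)
            + (-(1/(4*(l:ℚ)-1)))*((q.2:ℚ)*((q.2:ℚ)-1)) + 0*((q.1:ℚ)*(q.2:ℚ)))
            * (l.choose q.1 : ℚ) * ((4*l).choose q.2 : ℚ) := by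
      intro q _
      have e : ((2*(a:ℚ)-2*(q.1:ℚ))^2 + (q.2:ℚ)*(4*(l:ℚ)-(q.2:ℚ))/(4*(l:ℚ)-1))
          = (4*(a:ℚ)^2 + (4-8*(a:ℚ))*(q.1:ℚ) + 4*((q.1:ℚ)*((q.1:ℚ)-1)) + 1*(q.2:ℚ)
            + (-(1/(4*(l:ℚ)-1)))*((q.2:ℚ)*((q.2:ℚ)-1)) + 0*((q.1:ℚ)*(q.2:ℚ))) := by
        field_simp
        ring
      rw [e]
    rw [Finset.sum_congr rfl hpt,
      combo l (4*l) r (by omega) (4*(a:ℚ)^2) (4-8*(a:ℚ)) 4 1 (-(1/(4*(l:ℚ)-1))) 0,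
      show l+4*l = 5*l from by ring]
    push_cast
    rw [show ((l:ℚ)+4*(l:ℚ)) = 5*(l:ℚ) from by ring]
    field_simp
    ring
  -- convert the tuple sum to nested sums
  have conv1 : (∑ v ∈ Finset.Nat.antidiagonalTuple 4 m,
        (2 * (v 0 : ℚ) - 2 * (v 1 : ℚ) + (v 2 : ℚ) - (v 3 : ℚ)) ^ 2 *
          (l.choose (v 0) : ℚ) * (l.choose (v 1) : ℚ) *
          ((2 * l).choose (v 2) : ℚ) * ((2 * l).choose (v 3) : ℚ))
      = ∑ p ∈ Finset.HasAntidiagonal.antidiagonal m, ∑ q ∈ Finset.HasAntidiagonal.antidiagonal p.2, ∑ x ∈ Finset.HasAntidiagonal.antidiagonal q.2,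
          (2 * (p.1 : ℚ) - 2 * (q.1 : ℚ) + (x.1 : ℚ) - (x.2 : ℚ)) ^ 2 *
            (l.choose p.1 : ℚ) * (l.choose q.1 : ℚ) *
            ((2 * l).choose x.1 : ℚ) * ((2 * l).choose x.2 : ℚ) := by
    refine (AT_succ_sum 3 m _).trans ?_
    apply Finset.sum_congr rfl; intro p _
    refine (AT_succ_sum 2 p.2 _).trans ?_
    apply Finset.sum_congr rfl; intro q _
    rw [Finset.Nat.antidiagonalTuple_two, Finset.sum_map]
    apply Finset.sum_congr rfl; intro x _
    rfl
  rw [conv1]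
  have conv2 : ∀ p ∈ Finset.HasAntidiagonal.antidiagonal m,
      (∑ q ∈ Finset.HasAntidiagonal.antidiagonal p.2, ∑ x ∈ Finset.HasAntidiagonal.antidiagonal q.2,
          (2 * (p.1 : ℚ) - 2 * (q.1 : ℚ) + (x.1 : ℚ) - (x.2 : ℚ)) ^ 2 *
            (l.choose p.1 : ℚ) * (l.choose q.1 : ℚ) *
            ((2 * l).choose x.1 : ℚ) * ((2 * l).choose x.2 : ℚ))
      = (l.choose p.1 : ℚ) *
          ((4*(p.1:ℚ)^2 - (8/5)*(p.1:ℚ)*(p.2:ℚ) + (8/5)*(p.2:ℚ)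
            + (4*((l:ℚ)-2)/(5*(5*(l:ℚ)-1)))*((p.2:ℚ)*((p.2:ℚ)-1))) * ((5*l).choose p.2 : ℚ)) := by
    intro p _
    have inner : ∀ q ∈ Finset.HasAntidiagonal.antidiagonal p.2,
        (∑ x ∈ Finset.HasAntidiagonal.antidiagonal q.2,
          (2 * (p.1 : ℚ) - 2 * (q.1 : ℚ) + (x.1 : ℚ) - (x.2 : ℚ)) ^ 2 *
            (l.choose p.1 : ℚ) * (l.choose q.1 : ℚ) *
            ((2 * l).choose x.1 : ℚ) * ((2 * l).choose x.2 : ℚ))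
        = (l.choose p.1 : ℚ) *
            ((((2*(p.1:ℚ)-2*(q.1:ℚ))^2 + (q.2:ℚ)*(4*(l:ℚ)-(q.2:ℚ))/(4*(l:ℚ)-1))
              * (l.choose q.1 : ℚ)) * ((4*l).choose q.2 : ℚ)) := by
      intro q _
      have e1 : (∑ x ∈ Finset.HasAntidiagonal.antidiagonal q.2,
          (2 * (p.1 : ℚ) - 2 * (q.1 : ℚ) + (x.1 : ℚ) - (x.2 : ℚ)) ^ 2 *
            (l.choose p.1 : ℚ) * (l.choose q.1 : ℚ) *
            ((2 * l).choose x.1 : ℚ) * ((2 * l).choose x.2 : ℚ))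
          = ((l.choose p.1 : ℚ) * (l.choose q.1 : ℚ)) *
            ∑ x ∈ Finset.HasAntidiagonal.antidiagonal q.2,
              (2*(p.1:ℚ) - 2*(q.1:ℚ) + (x.1:ℚ) - (x.2:ℚ))^2 *
                ((2*l).choose x.1 : ℚ) * ((2*l).choose x.2 : ℚ) := by
        rw [Finset.mul_sum]
        apply Finset.sum_congr rfl; intro x _
        ring
      rw [e1, L3 p.1 q.1 q.2]
      ring
    rw [Finset.sum_congr rfl inner, ← Finset.mul_sum]
    congr 1
    have e2 : ∀ q ∈ Finset.HasAntidiagonal.antidiagonal p.2,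
        ((((2*(p.1:ℚ)-2*(q.1:ℚ))^2 + (q.2:ℚ)*(4*(l:ℚ)-(q.2:ℚ))/(4*(l:ℚ)-1))
            * (l.choose q.1 : ℚ)) * ((4*l).choose q.2 : ℚ))
        = ((2*(p.1:ℚ)-2*(q.1:ℚ))^2 + (q.2:ℚ)*(4*(l:ℚ)-(q.2:ℚ))/(4*(l:ℚ)-1))
            * (l.choose q.1 : ℚ) * ((4*l).choose q.2 : ℚ) := fun q _ => by ring
    rw [Finset.sum_congr rfl e2, L2 p.1 p.2]
  rw [Finset.sum_congr rfl conv2]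
  have hpt : ∀ p ∈ Finset.HasAntidiagonal.antidiagonal m,
      (l.choose p.1 : ℚ) *
        ((4*(p.1:ℚ)^2 - (8/5)*(p.1:ℚ)*(p.2:ℚ) + (8/5)*(p.2:ℚ)
          + (4*((l:ℚ)-2)/(5*(5*(l:ℚ)-1)))*((p.2:ℚ)*((p.2:ℚ)-1))) * ((5*l).choose p.2 : ℚ))
      = (0 + 4*(p.1:ℚ) + 4*((p.1:ℚ)*((p.1:ℚ)-1)) + (8/5)*(p.2:ℚ)
          + (4*((l:ℚ)-2)/(5*(5*(l:ℚ)-1)))*((p.2:ℚ)*((p.2:ℚ)-1))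
          + (-(8/5))*((p.1:ℚ)*(p.2:ℚ))) * (l.choose p.1 : ℚ) * ((5*l).choose p.2 : ℚ) :=
    fun p _ => by ring
  rw [Finset.sum_congr rfl hpt,
    combo l (5*l) m (by omega) 0 4 4 (8/5) (4*((l:ℚ)-2)/(5*(5*(l:ℚ)-1))) (-(8/5)),
    show l+5*l = 6*l from by ring]
  push_cast
  rw [show ((l:ℚ)+5*(l:ℚ)) = 6*(l:ℚ) from by ring]
  field_simp
  ring
end
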